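/- Iterative value computation is correct: given an ℕ-representation (λ, μ, ν) of an unambiguous automaton recognizing L, define by induction on prefixes of a word w = a_1⋯a_ℓ: α(ε) = λ, γ(ε) = 0, α(u·a) = α(u)·μ(a), γ(u·a) = λ + α(u)·σ_a + γ(u)·σ, where σ_a = Σ_{b<a} μ(b) and σ = Σ_{b∈A} μ(b). Then for every w ∈ L, γ(w)·ν = val_L(w). -/

import Mathlib

open Matrix

/-- The radix order on words over a totally ordered alphabet. -/
def radixLt {A : Type*} [LinearOrder A] (u v : List A) : Prop :=
  u.length < v.length ∨ (u.length = v.length ∧ List.Lex (· < ·) u v)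

/-- The value of a word `w` in the abstract numeration system given by `L`. -/
noncomputable def ansVal {A : Type*} [LinearOrder A] (L : Set (List A)) (w : List A) : ℕ :=
  {v ∈ L | radixLt v w}.ncard

/-- The pair `(α(w), γ(w))` computed iteratively along the letters of `w`:
`α(ε) = λ`, `γ(ε) = 0`, `α(u·a) = α(u)·μ(a)`,
`γ(u·a) = λ + α(u)·σ_a + γ(u)·σ`. -/
def alphaGamma {A : Type*} [Fintype A] [LinearOrder A] {k : ℕ}
    (μ1 : A → Matrix (Fin k) (Fin k) ℕ) (lam : Fin k → ℕ) (w : List A) :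
    (Fin k → ℕ) × (Fin k → ℕ) :=
  w.foldl
    (fun p a =>
      (p.1 ᵥ* μ1 a,
       lam + p.1 ᵥ* (∑ b ∈ Finset.univ.filter (· < a), μ1 b) + p.2 ᵥ* (∑ b : A, μ1 b)))
    (lam, 0)

/-!
By induction along `w = u·a`, `α(w) = λ·μ(w)` and `γ(w) = ∑_{v ≺ w} λ·μ(v)`. The induction step
rests on the decomposition of the words below `u·a` in the radix order: the empty word, the
words `v·b` with `v ≺ u` and `b` arbitrary, and the words `u·b` with `b < a`. These three
families are accounted for by the three terms `λ`, `γ(u)·σ` and `α(u)·σ_a`. Pairing with `ν`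
then counts the words of `L` below `w`.
-/

theorem List.lex_append_iff_of_length_eq {α : Type*} {r : α → α → Prop} {v u : List α}
    (s t : List α) (h : v.length = u.length) :
    Lex r (v ++ s) (u ++ t) ↔ Lex r v u ∨ v = u ∧ Lex r s t := by
  induction v generalizing u with
  | nil =>
    obtain rfl := List.eq_nil_of_length_eq_zero h.symm
    simp [List.not_lex_nil]
  | cons c v ih =>
    obtain _ | ⟨d, u⟩ := u
    · simp at h
    simp only [List.cons_append, List.cons_lex_cons_iff,
      ih (Nat.succ_injective h), List.cons.injEq]
    tauto

section RadixOrder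

variable {A : Type*} [LinearOrder A]

theorem radixLt_irrefl (u : List A) : ¬radixLt u u := by
  rintro (h | ⟨-, h⟩)
  exacts [lt_irrefl _ h, asymm h h]

theorem not_radixLt_nil (v : List A) : ¬radixLt v [] := by
  rintro (h | ⟨-, h⟩)
  exacts [Nat.not_lt_zero _ h, List.not_lex_nil h]

theorem nil_radixLt_concat (u : List A) (a : A) : radixLt [] (u ++ [a]) :=
  Or.inl (by simp)

theorem concat_radixLt_concat_iff {v u : List A} {b a : A} :
    radixLt (v ++ [b]) (u ++ [a]) ↔ radixLt v u ∨ v = u ∧ b < a := by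
  by_cases h : v.length = u.length
  · simp [radixLt, h, List.lex_append_iff_of_length_eq _ _ h]
  · have hne : v ≠ u := fun e => h (congrArg List.length e)
    simp [radixLt, h, hne]

theorem setOf_radixLt_finite [Finite A] (u : List A) : {v : List A | radixLt v u}.Finite :=
  (List.finite_length_le A u.length).subset fun _ h => h.elim le_of_lt fun h => h.1.le

variable [Fintype A]

noncomputable def radixPred (u : List A) : Finset (List A) :=
  (setOf_radixLt_finite u).toFinset

@[simp]
theorem mem_radixPred {u v : List A} : v ∈ radixPred u ↔ radixLt v u :=
  Set.Finite.mem_toFinset _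

theorem radixPred_nil : radixPred ([] : List A) = ∅ :=
  Finset.eq_empty_of_forall_notMem fun v hv => not_radixLt_nil v (mem_radixPred.1 hv)

theorem radixPred_concat (u : List A) (a : A) :
    radixPred (u ++ [a]) = insert []
      (({u} ×ˢ Finset.univ.filter (· < a) ∪ radixPred u ×ˢ Finset.univ).image
        fun p => p.1 ++ [p.2]) := by
  ext v
  rcases List.eq_nil_or_concat v with rfl | ⟨v, b, rfl⟩
  · simp [nil_radixLt_concat]
  · simp [concat_radixLt_concat_iff, @eq_comm _ u, and_comm, or_comm]

theorem sum_radixPred_concat {M : Type*} [AddCommMonoid M] (f : List A → M) (u : List A)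
    (a : A) :
    ∑ v ∈ radixPred (u ++ [a]), f v =
      f [] + ∑ b ∈ Finset.univ.filter (· < a), f (u ++ [b]) +
        ∑ v ∈ radixPred u, ∑ b, f (v ++ [b]) := by
  have hinj : Function.Injective fun p : List A × A => p.1 ++ [p.2] := fun p q h =>
    Prod.ext_iff.2 (by simpa using List.append_inj' h rfl)
  have hdisj : Disjoint ({u} ×ˢ Finset.univ.filter (· < a)) (radixPred u ×ˢ Finset.univ) :=
    Finset.disjoint_product.2 <| Or.inl <| Finset.disjoint_singleton_left.2 fun h =>
      radixLt_irrefl u (mem_radixPred.1 h)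
  rw [radixPred_concat, Finset.sum_insert (by simp), Finset.sum_image hinj.injOn,
    Finset.sum_union hdisj, Finset.sum_product, Finset.sum_product, Finset.sum_singleton,
    add_assoc]

end RadixOrder

section Representation

variable {A : Type*} [Fintype A] [LinearOrder A] {k : ℕ}

theorem alphaGamma_concat (μ1 : A → Matrix (Fin k) (Fin k) ℕ) (lam : Fin k → ℕ) (u : List A)
    (a : A) :
    alphaGamma μ1 lam (u ++ [a]) =
      ((alphaGamma μ1 lam u).1 ᵥ* μ1 a,
       lam + (alphaGamma μ1 lam u).1 ᵥ* (∑ b ∈ Finset.univ.filter (· < a), μ1 b)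
         + (alphaGamma μ1 lam u).2 ᵥ* (∑ b : A, μ1 b)) :=
  List.foldl_concat ..

theorem alphaGamma_eq_sum_radixPred (μ : List A → Matrix (Fin k) (Fin k) ℕ)
    (hμ1 : μ [] = 1) (hμm : ∀ u v : List A, μ (u ++ v) = μ u * μ v) (lam : Fin k → ℕ)
    (w : List A) :
    alphaGamma (fun a => μ [a]) lam w = (lam ᵥ* μ w, ∑ v ∈ radixPred w, lam ᵥ* μ v) := by
  induction w using List.reverseRecOn with
  | nil => simp [alphaGamma, hμ1, radixPred_nil]
  | append_singleton u a ih =>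
    have hconcat : ∀ v b, lam ᵥ* μ (v ++ [b]) = lam ᵥ* μ v ᵥ* μ [b] := fun v b => by
      rw [hμm, vecMul_vecMul]
    rw [alphaGamma_concat, ih, sum_radixPred_concat, hμ1, vecMul_one]
    simp only [hconcat, vecMul_sum, sum_vecMul]
    rw [Finset.sum_comm (s := Finset.univ)]

end Representation

theorem alphaGamma_computes_value_general {A : Type*} [Fintype A] [LinearOrder A]
    (k : ℕ) (μ : List A → Matrix (Fin k) (Fin k) ℕ)
    (hμ1 : μ [] = 1) (hμm : ∀ u v : List A, μ (u ++ v) = μ u * μ v)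
    (lam ν : Fin k → ℕ) (L : Set (List A)) [DecidablePred (· ∈ L)]
    (hchar : ∀ v : List A, lam ⬝ᵥ (μ v *ᵥ ν) = if v ∈ L then 1 else 0)
    (w : List A) :
    (alphaGamma (fun a => μ [a]) lam w).2 ⬝ᵥ ν = ansVal L w := by
  have hcount : {v ∈ L | radixLt v w} = ↑((radixPred w).filter (· ∈ L)) := by
    ext v
    simp [and_comm]
  calc (alphaGamma (fun a => μ [a]) lam w).2 ⬝ᵥ ν
      = ∑ v ∈ radixPred w, lam ⬝ᵥ (μ v *ᵥ ν) := by
        simp only [alphaGamma_eq_sum_radixPred μ hμ1 hμm, sum_dotProduct, dotProduct_mulVec]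
    _ = ((radixPred w).filter (· ∈ L)).card := by simp only [hchar, Finset.card_filter]
    _ = ansVal L w := by rw [ansVal, hcount, Set.ncard_coe_finset]

/-- Correctness of the iterative value computation: for every `w ∈ L`,
`γ(w)·ν = val_L(w)`. -/
theorem alphaGamma_computes_value {A : Type*} [Fintype A] [LinearOrder A]
    (k : ℕ) (μ : List A → Matrix (Fin k) (Fin k) ℕ)
    (hμ1 : μ [] = 1) (hμm : ∀ u v : List A, μ (u ++ v) = μ u * μ v)
    (lam ν : Fin k → ℕ) (L : Set (List A)) [DecidablePred (· ∈ L)]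
    (hchar : ∀ v : List A, lam ⬝ᵥ (μ v *ᵥ ν) = if v ∈ L then 1 else 0)
    (w : List A) (hw : w ∈ L) :
    (alphaGamma (fun a => μ [a]) lam w).2 ⬝ᵥ ν = ansVal L w :=
  alphaGamma_computes_value_general k μ hμ1 hμm lam ν L hchar w
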